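/- arXiv:1404.5886 — 6 statements merged into one kernel-verified Lean document; each statement's English description precedes it below -/
import Mathlib

section
/- The density f(x) = x e^{−x} on (0,∞) is log-concave but not strongly log-concave (for any positive parameter), while its associated function I(p) = f(F^{−1}(p)) is strongly concave on (0,1); indeed φ''(x)/f(x) = x^{−3}e^{x} ≥ e³/27 > 0 for all x > 0, where φ = −log f. -/
/-!
`x - log x` is convex as the sum of a linear and a convex function. Its second derivative `x⁻²`
falls below `1/c` beyond `√c`, so subtracting `x²/(2c)` leaves a function that is strictly concave
there, hence not convex. The bound `e³/27 ≤ x⁻³ eˣ` is `e t ≤ eᵗ` at `t = x/3`, cubed.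
-/
open Real Set Filter Topology

theorem ConvexOn.not_strictConcaveOn {E β : Type*} [AddCommGroup E] [Module ℝ E]
    [AddCommGroup β] [PartialOrder β] [IsOrderedAddMonoid β] [Module ℝ β] [PosSMulMono ℝ β]
    {s : Set E} {f : E → β} (hf : ConvexOn ℝ s f) {x y : E} (hx : x ∈ s) (hy : y ∈ s)
    (hxy : x ≠ y) : ¬ StrictConcaveOn ℝ s f := fun h =>
  (h.2 hx hy hxy one_half_pos one_half_pos (add_halves 1)).not_ge
    (hf.2 hx hy one_half_pos.le one_half_pos.le (add_halves 1))

theorem convexOn_sub_log : ConvexOn ℝ (Ioi 0) fun x => x - log x :=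
  (convexOn_id (convex_Ioi 0)).add strictConcaveOn_log_Ioi.concaveOn.neg

theorem deriv_sub_log_sub_sq_div_eventuallyEq (c : ℝ) {x : ℝ} (hx : x ≠ 0) :
    deriv (fun y => y - log y - y ^ 2 / (2 * c)) =ᶠ[𝓝 x] fun y => 1 - y⁻¹ - y / c := by
  filter_upwards [eventually_ne_nhds hx] with y hy
  have : HasDerivAt (fun y => y - log y - y ^ 2 / (2 * c)) (1 - y⁻¹ - ↑2 * y ^ 1 / (2 * c)) y :=
    ((hasDerivAt_id' y).sub (hasDerivAt_log hy)).sub ((hasDerivAt_pow 2 y).div_const (2 * c))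
  rw [this.deriv]
  by_cases hc : c = 0
  · simp [hc]
  · field_simp

theorem deriv2_sub_log_sub_sq_div (c : ℝ) {x : ℝ} (hx : x ≠ 0) :
    deriv^[2] (fun y => y - log y - y ^ 2 / (2 * c)) x = (x ^ 2)⁻¹ - c⁻¹ := by
  rw [Function.iterate_succ_apply, Function.iterate_one,
    (deriv_sub_log_sub_sq_div_eventuallyEq c hx).deriv_eq]
  have : HasDerivAt (fun y => 1 - y⁻¹ - y / c) (0 - -(x ^ 2)⁻¹ - 1 / c) x :=
    ((hasDerivAt_const x 1).sub (hasDerivAt_inv hx)).sub ((hasDerivAt_id' x).div_const c)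
  rw [this.deriv]
  ring

theorem deriv2_sub_log {x : ℝ} (hx : x ≠ 0) :
    deriv^[2] (fun y => y - log y) x = (x ^ 2)⁻¹ := by
  -- at `c = 0` the quadratic term is `y ^ 2 / 0 = 0`
  simpa using deriv2_sub_log_sub_sq_div 0 hx

theorem not_convexOn_sub_log_sub_sq_div {c : ℝ} (hc : 0 < c) :
    ¬ ConvexOn ℝ (Ioi 0) fun x => x - log x - x ^ 2 / (2 * c) := by
  have hconcave : StrictConcaveOn ℝ (Ioi √c) fun x => x - log x - x ^ 2 / (2 * c) := by
    refine strictConcaveOn_of_deriv2_neg' (convex_Ioi _) ?_ fun x hx => ?_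
    · have : ∀ x ∈ Ioi √c, x ≠ 0 := fun x hx => ((sqrt_nonneg c).trans_lt hx).ne'
      fun_prop (disch := assumption)
    · have hx0 : 0 < x := (sqrt_nonneg c).trans_lt hx
      rw [deriv2_sub_log_sub_sq_div c hx0.ne', sub_neg]
      exact inv_strictAnti₀ hc (lt_sq_of_sqrt_lt hx)
  intro hconvex
  have hsub := hconvex.subset (Ioi_subset_Ioi (sqrt_nonneg c)) (convex_Ioi _)
  exact hsub.not_strictConcaveOn (x := √c + 1) (y := √c + 2) (by simp) (by simp)
    (by norm_num) hconcave

theorem exp_nat_div_pow_le (n : ℕ) {x : ℝ} (hx : 0 < x) : exp n / n ^ n ≤ exp x / x ^ n := by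
  rcases n.eq_zero_or_pos with rfl | hn
  · simpa using hx.le
  have hn' : (0 : ℝ) < n := by exact_mod_cast hn
  have key : exp 1 * x ≤ n * exp (x / n) := by
    have := exp_one_mul_le_exp (x := x / n)
    rw [mul_div_assoc', div_le_iff₀ hn'] at this
    linarith
  have hpow : exp n * x ^ n ≤ n ^ n * exp x := by
    calc exp n * x ^ n = (exp 1 * x) ^ n := by rw [mul_pow, ← exp_nat_mul, mul_one]
      _ ≤ (n * exp (x / n)) ^ n := by gcongr
      _ = n ^ n * exp x := by rw [mul_pow, ← exp_nat_mul, mul_div_cancel₀ _ hn'.ne']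
  rw [div_le_div_iff₀ (by positivity) (by positivity)]
  linarith

/-- The density `f(x) = x e^{−x}` on `(0,∞)` is log-concave (its potential
`φ(x) = x − log x` is convex on `(0,∞)`) but not strongly log-concave for any
positive parameter, while `φ''(x)/f(x) = x⁻³ eˣ ≥ e³/27 > 0` for all `x > 0`
(which yields strong concavity of the associated function `I`). -/
theorem stmt_5 :
    ConvexOn ℝ (Set.Ioi (0:ℝ)) (fun x => x - Real.log x) ∧
    (∀ c : ℝ, 0 < c →
      ¬ ConvexOn ℝ (Set.Ioi (0:ℝ)) (fun x => (x - Real.log x) - x ^ 2 / (2 * c))) ∧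
    (∀ x : ℝ, 0 < x →
      deriv (deriv fun y => y - Real.log y) x / (x * Real.exp (-x))
          = x⁻¹ ^ 3 * Real.exp x ∧
      Real.exp 3 / 27 ≤ x⁻¹ ^ 3 * Real.exp x) := by
  refine ⟨convexOn_sub_log, fun c hc => not_convexOn_sub_log_sub_sq_div hc, fun x hx => ⟨?_, ?_⟩⟩
  · rw [show deriv (deriv fun y => y - log y) x = _ from deriv2_sub_log hx.ne', exp_neg]
    field_simp
  · simpa [div_eq_inv_mul, mul_comm, show (3 : ℝ) ^ 3 = 27 by norm_num]
      using exp_nat_div_pow_le 3 hx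
end

section
/- If a probability measure μ on ℝ is log-concave with continuous positive density f on (a,b) and distribution function F strictly increasing on (a,b), then the function I(p) = f(F^{−1}(p)) is concave on (0,1). -/
/-! The slope of `I = f ∘ F⁻¹` between `p = F x` and `q = F z` is `(f z - f x) / (F z - F x)`, so
concavity of `I` says that these "density slopes" decrease along three points `x < y < z`.
If `f y < f z`, let `c` be the slope of `log f` on `[y, z]`. By concavity of `log f`, the
exponential `e u = f y * exp (c * (u - y))` lies above `f` on `[x, y]` and below `f` on `[y, z]`;
since `e' = c * e` and `F' = f`, comparing the derivatives of `c * F` and `e` gives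
`c * (F y - F x) ≤ f y - f x` and `f z - f y ≤ c * (F z - F y)`, i.e. `c` separates the two
density slopes. The case `f y < f x` is its mirror image under `u ↦ -u`, and otherwise `f y` is
the largest of the three values and the inequality holds by sign. -/

open Real Set

lemma concaveOn_log_of_rpow_mul_rpow_le {f : ℝ → ℝ} {s : Set ℝ} (hs : Convex ℝ s)
    (hpos : ∀ x ∈ s, 0 < f x)
    (h : ∀ x ∈ s, ∀ y ∈ s, ∀ t ∈ Icc (0 : ℝ) 1, f x ^ t * f y ^ (1 - t) ≤ f (t * x + (1 - t) * y)) :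
    ConcaveOn ℝ s (fun x => log (f x)) := by
  refine ⟨hs, fun x hx y hy a b ha _ hab => ?_⟩
  obtain rfl : b = 1 - a := by linarith
  have hx' := hpos x hx
  have hy' := hpos y hy
  have := log_le_log (by positivity) (h x hx y hy a ⟨ha, by linarith⟩)
  rwa [log_mul (by positivity) (by positivity), log_rpow hx', log_rpow hy'] at this

lemma strictMonoOn_of_hasDerivAt_pos {f F : ℝ → ℝ} {s : Set ℝ} (hs : Convex ℝ s)
    (hF : ∀ x ∈ s, HasDerivAt F (f x) x) (hpos : ∀ x ∈ s, 0 < f x) : StrictMonoOn F s :=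
  strictMonoOn_of_deriv_pos hs (fun x hx => (hF x hx).continuousAt.continuousWithinAt)
    fun x hx => (hF x (interior_subset hx)).deriv ▸ hpos x (interior_subset hx)

lemma sub_le_sub_of_hasDerivAt_le {F G f g : ℝ → ℝ} {u v : ℝ} (huv : u ≤ v)
    (hF : ∀ x ∈ Icc u v, HasDerivAt F (f x) x) (hG : ∀ x ∈ Icc u v, HasDerivAt G (g x) x)
    (hfg : ∀ x ∈ Icc u v, f x ≤ g x) : F v - F u ≤ G v - G u := by
  have hmono : MonotoneOn (fun x => G x - F x) (Icc u v) :=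
    monotoneOn_of_hasDerivWithinAt_nonneg (convex_Icc u v)
      (fun x hx => ((hG x hx).continuousAt.sub (hF x hx).continuousAt).continuousWithinAt)
      (fun x hx => ((hG x (interior_subset hx)).sub (hF x (interior_subset hx))).hasDerivWithinAt)
      (fun x hx => sub_nonneg.2 (hfg x (interior_subset hx)))
  linarith [hmono ⟨le_rfl, huv⟩ ⟨huv, le_rfl⟩ huv]

section Secant

variable {g : ℝ → ℝ} {s : Set ℝ} {y z u : ℝ}

lemma ConcaveOn.le_add_slope_mul_of_le (hg : ConcaveOn ℝ s g) (hy : y ∈ s) (hz : z ∈ s)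
    (hu : u ∈ s) (hyz : y < z) (huy : u ≤ y) : g u ≤ g y + slope g y z * (u - y) := by
  rcases huy.lt_or_eq with huy | rfl
  · have := hg.slope_anti hy ⟨hu, huy.ne⟩ ⟨hz, hyz.ne'⟩ (huy.le.trans hyz.le)
    rw [slope_def_field, slope_def_field, le_div_iff_of_neg (sub_neg.2 huy)] at this
    rw [slope_def_field]
    linarith
  · simp

lemma ConcaveOn.add_slope_mul_le_of_mem_Icc (hg : ConcaveOn ℝ s g) (hy : y ∈ s) (hz : z ∈ s)
    (hu : u ∈ Icc y z) : g y + slope g y z * (u - y) ≤ g u := by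
  rcases hu.1.lt_or_eq with hyu | rfl
  · have := hg.slope_anti hy ⟨hg.1.ordConnected.out hy hz hu, hyu.ne'⟩
      ⟨hz, (hyu.trans_le hu.2).ne'⟩ hu.2
    rw [slope_def_field, slope_def_field, le_div_iff₀ (sub_pos.2 hyu)] at this
    rw [slope_def_field]
    linarith
  · simp

end Secant

section DensitySlope

variable {f F : ℝ → ℝ} {s : Set ℝ} {x y z : ℝ}

theorem ConcaveOn.density_slope_anti_adjacent_of_lt (hlc : ConcaveOn ℝ s (fun u => log (f u)))
    (hpos : ∀ u ∈ s, 0 < f u) (hF : ∀ u ∈ s, HasDerivAt F (f u) u)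
    (hx : x ∈ s) (hz : z ∈ s) (hxy : x < y) (hyz : y < z) (hfyz : f y < f z) :
    (f z - f y) / (F z - F y) ≤ (f y - f x) / (F y - F x) := by
  have hIcc : Icc x z ⊆ s := hlc.1.ordConnected.out hx hz
  have hy : y ∈ s := hIcc ⟨hxy.le, hyz.le⟩
  set c := slope (fun u => log (f u)) y z with hc_def
  have hc : 0 < c := by
    rw [hc_def, slope_def_field]
    exact div_pos (sub_pos.2 (log_lt_log (hpos y hy) hfyz)) (sub_pos.2 hyz)
  set e : ℝ → ℝ := fun u => exp (log (f y) + c * (u - y)) with he_def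
  have he : ∀ u, HasDerivAt e (c * e u) u := fun u => by
    have : HasDerivAt (fun u => log (f y) + c * (u - y)) c u := by
      simpa using (((hasDerivAt_id u).sub_const y).const_mul c).const_add (log (f y))
    exact this.exp.congr_deriv (mul_comm _ _)
  have hey : e y = f y := by simp [he_def, exp_log (hpos y hy)]
  have hez : e z = f z := by
    simp only [he_def, hc_def, slope_def_field]
    rw [div_mul_cancel₀ _ (sub_pos.2 hyz).ne', add_sub_cancel, exp_log (hpos z hz)]
  have hbelow : ∀ u ∈ Icc x y, f u ≤ e u := fun u hu => by
    rw [← exp_log (hpos u (hIcc ⟨hu.1, hu.2.trans hyz.le⟩))]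
    exact exp_le_exp.2 (hlc.le_add_slope_mul_of_le hy hz (hIcc ⟨hu.1, hu.2.trans hyz.le⟩) hyz hu.2)
  have habove : ∀ u ∈ Icc y z, e u ≤ f u := fun u hu => by
    rw [← exp_log (hpos u (hIcc ⟨hxy.le.trans hu.1, hu.2⟩))]
    exact exp_le_exp.2 (hlc.add_slope_mul_le_of_mem_Icc hy hz hu)
  have hleft : c * F y - c * F x ≤ e y - e x :=
    sub_le_sub_of_hasDerivAt_le hxy.le
      (fun u hu => (hF u (hIcc ⟨hu.1, hu.2.trans hyz.le⟩)).const_mul c) (fun u _ => he u)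
      (fun u hu => mul_le_mul_of_nonneg_left (hbelow u hu) hc.le)
  have hright : e z - e y ≤ c * F z - c * F y :=
    sub_le_sub_of_hasDerivAt_le hyz.le (fun u _ => he u)
      (fun u hu => (hF u (hIcc ⟨hxy.le.trans hu.1, hu.2⟩)).const_mul c)
      (fun u hu => mul_le_mul_of_nonneg_left (habove u hu) hc.le)
  have hfx := hbelow x ⟨le_rfl, hxy.le⟩
  have hFmono := strictMonoOn_of_hasDerivAt_pos hlc.1 hF hpos
  calc (f z - f y) / (F z - F y) ≤ c :=
        (div_le_iff₀ (sub_pos.2 (hFmono hy hz hyz))).2 (by linarith)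
    _ ≤ (f y - f x) / (F y - F x) :=
        (le_div_iff₀ (sub_pos.2 (hFmono hx hy hxy))).2 (by linarith)

theorem ConcaveOn.density_slope_anti_adjacent (hlc : ConcaveOn ℝ s (fun u => log (f u)))
    (hpos : ∀ u ∈ s, 0 < f u) (hF : ∀ u ∈ s, HasDerivAt F (f u) u)
    (hx : x ∈ s) (hz : z ∈ s) (hxy : x < y) (hyz : y < z) :
    (f z - f y) / (F z - F y) ≤ (f y - f x) / (F y - F x) := by
  rcases lt_or_ge (f y) (f z) with hfyz | hfzy
  · exact hlc.density_slope_anti_adjacent_of_lt hpos hF hx hz hxy hyz hfyz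
  rcases lt_or_ge (f y) (f x) with hfyx | hfxy
  · have hmirror := (hlc.comp_linearMap (-LinearMap.id)).density_slope_anti_adjacent_of_lt
      (F := fun u => -F (-u)) (x := -z) (y := -y) (z := -x)
      (fun u hu => hpos (-u) hu)
      (fun u hu => by
        have := ((hF (-u) hu).comp u (hasDerivAt_neg u)).neg
        rwa [mul_neg_one, neg_neg] at this)
      (by simpa using hz) (by simpa using hx) (neg_lt_neg hyz) (neg_lt_neg hxy)
      (by simpa using hfyx)
    simp only [LinearMap.neg_apply, LinearMap.id_apply, neg_neg] at hmirror
    rw [neg_sub_neg, neg_sub_neg] at hmirror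
    rw [← neg_sub (f y) (f z), ← neg_sub (f x) (f y), neg_div, neg_div]
    exact neg_le_neg hmirror
  · have hFmono := strictMonoOn_of_hasDerivAt_pos hlc.1 hF hpos
    have hy : y ∈ s := hlc.1.ordConnected.out hx hz ⟨hxy.le, hyz.le⟩
    exact (div_nonpos_of_nonpos_of_nonneg (by linarith) (sub_pos.2 (hFmono hy hz hyz)).le).trans
      (div_nonneg (by linarith) (sub_pos.2 (hFmono hx hy hxy)).le)

end DensitySlope

theorem stmt_7_general (f F Finv : ℝ → ℝ) (a b : ℝ)
    (hf_pos : ∀ x ∈ Set.Ioo a b, 0 < f x)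
    (hlc : ∀ x ∈ Set.Ioo a b, ∀ y ∈ Set.Ioo a b, ∀ t ∈ Set.Icc (0:ℝ) 1,
        f (t * x + (1 - t) * y) ≥ f x ^ t * f y ^ (1 - t))
    (hF : ∀ x ∈ Set.Ioo a b, HasDerivAt F (f x) x)
    (hFmono : StrictMonoOn F (Set.Ioo a b))
    (hmaps : ∀ p ∈ Set.Ioo (0:ℝ) 1, Finv p ∈ Set.Ioo a b ∧ F (Finv p) = p) :
    ConcaveOn ℝ (Set.Ioo (0:ℝ) 1) (fun p => f (Finv p)) := by
  have hlog := concaveOn_log_of_rpow_mul_rpow_le (convex_Ioo a b) hf_pos hlc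
  refine concaveOn_of_slope_anti_adjacent (convex_Ioo 0 1) fun {p m q} hp hq hpm hmq => ?_
  obtain ⟨hx, hFx⟩ := hmaps p hp
  obtain ⟨hy, hFy⟩ := hmaps m ⟨hp.1.trans hpm, hmq.trans hq.2⟩
  obtain ⟨hz, hFz⟩ := hmaps q hq
  have hxy : Finv p < Finv m := (hFmono.lt_iff_lt hx hy).1 (by rwa [hFx, hFy])
  have hyz : Finv m < Finv q := (hFmono.lt_iff_lt hy hz).1 (by rwa [hFy, hFz])
  have := hlog.density_slope_anti_adjacent hf_pos hF hx hz hxy hyz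
  rwa [hFx, hFy, hFz] at this

/-- If a log-concave probability measure on ℝ has a continuous positive density `f`
on `(a,b)` with distribution function `F` strictly increasing on `(a,b)`, then
`I(p) = f(F⁻¹(p))` is concave on `(0,1)`. -/
theorem stmt_7 (f F Finv : ℝ → ℝ) (a b : ℝ) (hab : a < b)
    (hf_cont : ContinuousOn f (Set.Ioo a b))
    (hf_pos : ∀ x ∈ Set.Ioo a b, 0 < f x)
    (hf_nn : ∀ x, 0 ≤ f x)
    (hf_meas : Measurable f)
    (hdens : ∫ x, f x = 1)
    (hsupp : ∀ x ∉ Set.Ioo a b, f x = 0)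
    (hlc : ∀ x ∈ Set.Ioo a b, ∀ y ∈ Set.Ioo a b, ∀ t ∈ Set.Icc (0:ℝ) 1,
        f (t * x + (1 - t) * y) ≥ f x ^ t * f y ^ (1 - t))
    (hF : ∀ x ∈ Set.Ioo a b, HasDerivAt F (f x) x)
    (hFmono : StrictMonoOn F (Set.Ioo a b))
    (hmaps : ∀ p ∈ Set.Ioo (0:ℝ) 1, Finv p ∈ Set.Ioo a b ∧ F (Finv p) = p)
    (hmaps' : ∀ x ∈ Set.Ioo a b, F x ∈ Set.Ioo (0:ℝ) 1 ∧ Finv (F x) = x) :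
    ConcaveOn ℝ (Set.Ioo (0:ℝ) 1) (fun p => f (Finv p)) :=
  stmt_7_general f F Finv a b hf_pos hlc hF hFmono hmaps
end

section
/- If f is a log-concave density on ℝ with median m (so I(1/2) = f(m) where I(p) = f(F^{−1}(p)) is concave on (0,1)), then sup_{x∈ℝ} f(x) ≤ 2 f(m). -/
/-! Let `x > m` with `f x > f m`, and let `c > 0` be the slope of `log f` between `m` and `x`.
Concavity of `log f` gives `f y ≤ f m * exp (c * (y - m))` for `y ≤ m` and the reverse inequality
on `[m, x]`. Integrating, `1/2 = ∫_{y ≤ m} f ≤ f m / c` and `(f x - f m) / c ≤ ∫_m^x f ≤ 1/2`, hence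
`f x - f m ≤ c / 2 ≤ f m`. Points `x < m` are handled by reflecting `f`. -/

open MeasureTheory Real Set

lemma integrableOn_Iic_exp_mul_sub {c : ℝ} (hc : 0 < c) (m : ℝ) :
    IntegrableOn (fun y => exp (c * (y - m))) (Iic m) := by
  simp_rw [mul_sub, exp_sub]
  exact (integrableOn_exp_mul_Iic hc m).div_const _

lemma integral_Iic_exp_mul_sub {c : ℝ} (hc : 0 < c) (m : ℝ) :
    ∫ y in Iic m, exp (c * (y - m)) = c⁻¹ := by
  simp_rw [mul_sub, exp_sub]
  rw [integral_div, integral_exp_mul_Iic hc]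
  field_simp

lemma integral_Ioc_exp_mul_sub {c : ℝ} (hc : c ≠ 0) {m x : ℝ} (hmx : m ≤ x) :
    ∫ y in Ioc m x, exp (c * (y - m)) = (exp (c * (x - m)) - 1) / c := by
  rw [← intervalIntegral.integral_of_le hmx]
  simp_rw [mul_sub]
  rw [intervalIntegral.integral_comp_mul_sub (fun y => exp y) hc, integral_exp, sub_self, exp_zero,
    smul_eq_mul, inv_mul_eq_div]

lemma ConcaveOn.le_add_slope_mul_of_lt {s : Set ℝ} {φ : ℝ → ℝ} (hφ : ConcaveOn ℝ s φ) {a x y : ℝ}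
    (ha : a ∈ s) (hx : x ∈ s) (hy : y ∈ s) (hya : y < a) (hax : a < x) :
    φ y ≤ φ a + slope φ a x * (y - a) := by
  have hslope : slope φ a x ≤ slope φ a y :=
    hφ.slope_anti ha ⟨hy, hya.ne⟩ ⟨hx, hax.ne'⟩ (hya.trans hax).le
  have := sub_smul_slope φ a y
  rw [smul_eq_mul, vsub_eq_sub] at this
  linarith [mul_le_mul_of_nonpos_left hslope (sub_nonpos.2 hya.le)]

lemma ConcaveOn.add_slope_mul_le_of_lt_of_le {s : Set ℝ} {φ : ℝ → ℝ} (hφ : ConcaveOn ℝ s φ)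
    {a x y : ℝ} (ha : a ∈ s) (hx : x ∈ s) (hy : y ∈ s) (hay : a < y) (hyx : y ≤ x) :
    φ a + slope φ a x * (y - a) ≤ φ y := by
  have hslope : slope φ a x ≤ slope φ a y :=
    hφ.slope_anti ha ⟨hy, hay.ne'⟩ ⟨hx, (hay.trans_le hyx).ne'⟩ hyx
  have := sub_smul_slope φ a y
  rw [smul_eq_mul, vsub_eq_sub] at this
  linarith [mul_le_mul_of_nonneg_left hslope (sub_nonneg.2 hay.le)]

def IsLogConcave (f : ℝ → ℝ) : Prop :=
  ∀ x y t : ℝ, t ∈ Set.Icc (0:ℝ) 1 → f (t * x + (1 - t) * y) ≥ f x ^ t * f y ^ (1 - t)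

namespace IsLogConcave

variable {f : ℝ → ℝ}

lemma comp_neg (hf : IsLogConcave f) : IsLogConcave fun x => f (-x) := by
  intro x y t ht
  simpa only [mul_neg, neg_add] using hf (-x) (-y) t ht

lemma convex_pos (hf : IsLogConcave f) : Convex ℝ {x | 0 < f x} := by
  intro x hx y hy a b ha hb hab
  obtain rfl : b = 1 - a := by linarith
  have hx : 0 < f x := hx
  have hy : 0 < f y := hy
  exact lt_of_lt_of_le (by positivity) (hf x y a ⟨ha, by linarith⟩)

lemma concaveOn_log (hf : IsLogConcave f) : ConcaveOn ℝ {x | 0 < f x} fun x => log (f x) := by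
  refine ⟨hf.convex_pos, fun x hx y hy a b ha hb hab => ?_⟩
  obtain rfl : b = 1 - a := by linarith
  have hx : 0 < f x := hx
  have hy : 0 < f y := hy
  calc a • log (f x) + (1 - a) • log (f y) = log (f x ^ a * f y ^ (1 - a)) := by
        rw [log_mul (by positivity) (by positivity), log_rpow hx, log_rpow hy, smul_eq_mul,
          smul_eq_mul]
    _ ≤ log (f (a • x + (1 - a) • y)) := log_le_log (by positivity) (hf x y a ⟨ha, by linarith⟩)

lemma pos_of_integral_Iic_pos_of_integral_Ioi_pos (hf : IsLogConcave f) {m : ℝ}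
    (hl : 0 < ∫ y in Iic m, f y) (hr : 0 < ∫ y in Ioi m, f y) : 0 < f m := by
  obtain ⟨y, hym, hy⟩ : ∃ y ∈ Iic m, 0 < f y := by
    by_contra! h
    exact hl.not_ge (setIntegral_nonpos measurableSet_Iic h)
  obtain ⟨z, hmz, hz⟩ : ∃ z ∈ Ioi m, 0 < f z := by
    by_contra! h
    exact hr.not_ge (setIntegral_nonpos measurableSet_Ioi h)
  exact hf.convex_pos.ordConnected.out hy hz ⟨hym, le_of_lt hmz⟩

variable {m x : ℝ}

lemma le_mul_exp_slope (hf : IsLogConcave f) (hm : 0 < f m) (hx : 0 < f x) (hmx : m < x)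
    {y : ℝ} (hym : y ≤ m) : f y ≤ f m * exp (slope (fun z => log (f z)) m x * (y - m)) := by
  rcases le_or_gt (f y) 0 with hy | hy
  · exact hy.trans (by positivity)
  rcases hym.lt_or_eq with hym | rfl
  · rw [← exp_log hy, ← exp_log hm, ← exp_add]
    exact exp_le_exp.2 (hf.concaveOn_log.le_add_slope_mul_of_lt hm hx hy hym hmx)
  · simp

lemma mul_exp_slope_le (hf : IsLogConcave f) (hm : 0 < f m) (hx : 0 < f x) {y : ℝ}
    (hy : y ∈ Icc m x) : f m * exp (slope (fun z => log (f z)) m x * (y - m)) ≤ f y := by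
  have hy' : 0 < f y := hf.convex_pos.ordConnected.out hm hx hy
  rcases hy.1.lt_or_eq with hmy | rfl
  · rw [← exp_log hy', ← exp_log hm, ← exp_add]
    exact exp_le_exp.2 (hf.concaveOn_log.add_slope_mul_le_of_lt_of_le hm hx hy' hmy hy.2)
  · simp

lemma le_two_mul_of_le (hf : IsLogConcave f) (hf_nn : ∀ x, 0 ≤ f x) (hf_int : Integrable f)
    (hmed : ∫ y in Ioi m, f y ≤ ∫ y in Iic m, f y) (hm : 0 < f m) (hmx : m ≤ x) :
    f x ≤ 2 * f m := by
  rcases le_or_gt (f x) (f m) with hxm | hxm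
  · linarith
  have hmx : m < x := hmx.lt_of_ne (by rintro rfl; exact hxm.false)
  have hx : 0 < f x := hm.trans hxm
  set c := slope (fun z => log (f z)) m x
  have hcx : exp (c * (x - m)) = f x / f m := by
    rw [mul_comm, ← smul_eq_mul, sub_smul_slope, vsub_eq_sub, exp_sub, exp_log hx, exp_log hm]
  have hc : 0 < c := by
    rw [show c = _ from slope_def_field _ m x]
    exact div_pos (sub_pos.2 (log_lt_log hm hxm)) (sub_pos.2 hmx)
  have hleft : c * ∫ y in Iic m, f y ≤ f m := by
    have : ∫ y in Iic m, f y ≤ ∫ y in Iic m, f m * exp (c * (y - m)) :=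
      setIntegral_mono_on hf_int.integrableOn ((integrableOn_Iic_exp_mul_sub hc m).const_mul _)
        measurableSet_Iic fun y hy => hf.le_mul_exp_slope hm hx hmx hy
    rw [integral_const_mul, integral_Iic_exp_mul_sub hc] at this
    calc c * ∫ y in Iic m, f y ≤ c * (f m * c⁻¹) := mul_le_mul_of_nonneg_left this hc.le
      _ = f m := by field_simp
  have hright : f x - f m ≤ c * ∫ y in Ioi m, f y := by
    have : ∫ y in Ioc m x, f m * exp (c * (y - m)) ≤ ∫ y in Ioc m x, f y :=
      setIntegral_mono_on ((continuous_const.mul (by fun_prop)).integrableOn_Ioc)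
        hf_int.integrableOn measurableSet_Ioc fun y hy =>
          hf.mul_exp_slope_le hm hx (Ioc_subset_Icc_self hy)
    have hsub : ∫ y in Ioc m x, f y ≤ ∫ y in Ioi m, f y :=
      setIntegral_mono_set hf_int.integrableOn (ae_of_all _ hf_nn)
        Ioc_subset_Ioi_self.eventuallyLE
    rw [integral_const_mul, integral_Ioc_exp_mul_sub hc.ne' hmx.le, hcx] at this
    calc f x - f m = c * (f m * ((f x / f m - 1) / c)) := by field_simp
      _ ≤ c * ∫ y in Ioi m, f y := mul_le_mul_of_nonneg_left (this.trans hsub) hc.le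
  linarith [mul_le_mul_of_nonneg_left hmed hc.le]

lemma le_two_mul_of_integral_Iic_eq_integral_Ioi (hf : IsLogConcave f) (hf_nn : ∀ x, 0 ≤ f x)
    (hf_int : Integrable f) (hmed : ∫ y in Iic m, f y = ∫ y in Ioi m, f y) (hm : 0 < f m)
    (x : ℝ) : f x ≤ 2 * f m := by
  rcases le_total m x with hmx | hxm
  · exact hf.le_two_mul_of_le hf_nn hf_int hmed.ge hm hmx
  · simpa using hf.comp_neg.le_two_mul_of_le (fun y => hf_nn (-y)) hf_int.comp_neg
      (by rw [integral_comp_neg_Ioi, integral_comp_neg_Iic, neg_neg]; exact hmed.le)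
      (by simpa using hm) (neg_le_neg hxm)

end IsLogConcave

theorem stmt_8_general (f : ℝ → ℝ) (m : ℝ)
    (hf_nn : ∀ x, 0 ≤ f x)
    (hdens : ∫ x, f x = 1)
    (hlc : ∀ x y t : ℝ, t ∈ Set.Icc (0:ℝ) 1 →
        f (t * x + (1 - t) * y) ≥ f x ^ t * f y ^ (1 - t))
    (hmed : ∫ x in Set.Iic m, f x = 1 / 2) :
    ∀ x, f x ≤ 2 * f m := by
  have hf : IsLogConcave f := hlc
  have hf_int : Integrable f := .of_integral_ne_zero (by rw [hdens]; exact one_ne_zero)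
  have hIoi : ∫ x in Ioi m, f x = 1 / 2 := by
    have := integral_add_compl (measurableSet_Iic (a := m)) hf_int
    rw [compl_Iic, hdens, hmed] at this
    linarith
  have hm : 0 < f m := hf.pos_of_integral_Iic_pos_of_integral_Ioi_pos
    (by rw [hmed]; norm_num) (by rw [hIoi]; norm_num)
  exact hf.le_two_mul_of_integral_Iic_eq_integral_Ioi hf_nn hf_int (hmed.trans hIoi.symm) hm

/-- If `f` is a log-concave density on ℝ with median `m`, then
`sup_x f(x) ≤ 2 f(m)`. -/
theorem stmt_8 (f : ℝ → ℝ) (m : ℝ)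
    (hf_nn : ∀ x, 0 ≤ f x)
    (hf_meas : Measurable f)
    (hdens : ∫ x, f x = 1)
    (hlc : ∀ x y t : ℝ, t ∈ Set.Icc (0:ℝ) 1 →
        f (t * x + (1 - t) * y) ≥ f x ^ t * f y ^ (1 - t))
    (hmed : ∫ x in Set.Iic m, f x = 1 / 2) :
    ∀ x, f x ≤ 2 * f m :=
  stmt_8_general f m hf_nn hdens hlc hmed
end

section
/- Let f be a lower semicontinuous, bounded, compactly supported function on ℝ^{n+1} which is convexly layered (each superlevel set {f > α}, α > 0, is a balanced convex set). Then g(x) = ∫_ℝ f(x,t) dt is an even, radially monotone, lower semicontinuous function on ℝ^n. -/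
open MeasureTheory ENNReal

/-- If `f` is a lower semicontinuous, bounded, compactly supported, convexly layered
function on `ℝ^{n+1}`, then `g(x) = ∫ f(x,t) dt` is an even, radially monotone,
lower semicontinuous function on `ℝ^n`. -/
theorem stmt_9 {n : ℕ} (f : (Fin n → ℝ) × ℝ → ℝ)
    (hnn : ∀ p, 0 ≤ f p)
    (hlsc : LowerSemicontinuous f)
    (hbdd : ∃ M, ∀ p, f p ≤ M)
    (hsupp : HasCompactSupport f)
    (hlayer : ∀ α : ℝ, 0 < α →
        Convex ℝ {p | α < f p} ∧ ∀ p, α < f p → α < f (-p)) :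
    (∀ x, (∫ t, f (-x, t)) = ∫ t, f (x, t)) ∧
    (∀ x, ∀ r ∈ Set.Icc (0:ℝ) 1, (∫ t, f (x, t)) ≤ ∫ t, f (r • x, t)) ∧
    LowerSemicontinuous (fun x => ∫ t, f (x, t)) := by
  classical
  obtain ⟨M, hM⟩ := hbdd
  have hm : Measurable f := hlsc.measurable
  have hmx : ∀ x, Measurable fun t => f (x, t) := fun x =>
    hm.comp measurable_prodMk_left
  -- evenness of f
  have heven : ∀ p, f (-p) = f p := by
    have key : ∀ p, f p ≤ f (-p) := by
      intro p
      by_contra h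
      push_neg at h
      obtain ⟨α, hα1, hα2⟩ := exists_between h
      have hαpos : 0 < α := lt_of_le_of_lt (hnn (-p)) hα1
      exact absurd ((hlayer α hαpos).2 p hα2) (not_lt.mpr hα1.le)
    intro p
    have := key (-p); rw [neg_neg] at this
    exact le_antisymm this (key p)
  -- bound on second coordinates of the support
  set C : Set ℝ := Prod.snd '' tsupport f with hCdef
  have hCcomp : IsCompact C := hsupp.image continuous_snd
  obtain ⟨R, hR⟩ : ∃ R, C ⊆ Set.Icc (-R) R := by
    obtain ⟨r, hr⟩ := hCcomp.isBounded.subset_closedBall 0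
    refine ⟨r, ?_⟩
    rwa [Real.closedBall_eq_Icc, zero_sub, zero_add] at hr
  have hsnd : ∀ x t, f (x, t) ≠ 0 → t ∈ Set.Icc (-R) R := by
    intro x t h
    exact hR ⟨(x, t), subset_tsupport f h, rfl⟩
  -- lintegral representation
  set L : (Fin n → ℝ) → ℝ≥0∞ := fun x => ∫⁻ t, ENNReal.ofReal (f (x, t)) with hLdef
  have hLfin : ∀ x, L x ≠ ⊤ := by
    intro x
    have hb : ∀ t, ENNReal.ofReal (f (x, t)) ≤
        (Set.Icc (-R) R).indicator (fun _ => ENNReal.ofReal M) t := by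
      intro t
      by_cases ht : t ∈ Set.Icc (-R) R
      · rw [Set.indicator_of_mem ht]
        exact ENNReal.ofReal_le_ofReal (hM _)
      · rw [Set.indicator_of_notMem ht]
        have : f (x, t) = 0 := by
          by_contra h; exact ht (hsnd x t h)
        simp [this]
    have := lintegral_mono (μ := volume) hb
    rw [lintegral_indicator measurableSet_Icc _] at this
    refine ne_top_of_le_ne_top ?_ this
    simp only [lintegral_const, Measure.restrict_apply, MeasurableSet.univ, Set.univ_inter]
    exact ENNReal.mul_ne_top ENNReal.ofReal_ne_top (by simp [Real.volume_Icc])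
  have hg : ∀ x, (∫ t, f (x, t)) = (L x).toReal := by
    intro x
    exact integral_eq_lintegral_of_nonneg_ae (Filter.Eventually.of_forall fun t => hnn _)
      (hmx x).aestronglyMeasurable
  refine ⟨?_, ?_, ?_⟩
  · -- evenness of g
    intro x
    have h1 : (∫ t, f (-x, -t)) = ∫ t, f (-x, t) := integral_neg_eq_self (fun t => f (-x, t)) volume
    have h2 : ∀ t : ℝ, f (-x, -t) = f (x, t) := by
      intro t
      have : ((-x, -t) : (Fin n → ℝ) × ℝ) = -(x, t) := rfl
      rw [this, heven]
    rw [← h1]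
    simp only [h2]
  · -- radial monotonicity
    intro x r hr
    have hlc : ∀ y : Fin n → ℝ,
        L y = ∫⁻ α in Set.Ioi (0:ℝ), volume {t : ℝ | α < f (y, t)} := by
      intro y
      exact lintegral_eq_lintegral_meas_lt volume
        (Filter.Eventually.of_forall fun t => hnn _) (hmx y).aemeasurable
    have hslice : ∀ α : ℝ, 0 < α →
        volume {t : ℝ | α < f (x, t)} ≤ volume {t : ℝ | α < f (r • x, t)} := by
      intro α hα
      obtain ⟨hKconv, hKsym⟩ := hlayer α hα
      set S : Set ℝ := {t : ℝ | α < f (x, t)} with hSdef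
      rcases S.eq_empty_or_nonempty with hS | hS
      · simp [hS]
      have hSsub : S ⊆ Set.Icc (-R) R := by
        intro t ht
        exact hsnd x t (by have : (0:ℝ) < f (x, t) := lt_trans hα ht; linarith)
      have hbddA : BddAbove S := BddAbove.mono hSsub (bddAbove_Icc)
      have hbddB : BddBelow S := BddBelow.mono hSsub (bddBelow_Icc)
      set a := sInf S with hadef
      set b := sSup S with hbdef
      have hSIcc : S ⊆ Set.Icc a b := fun t ht => ⟨csInf_le hbddB ht, le_csSup hbddA ht⟩
      have hvolS : volume S ≤ ENNReal.ofReal (b - a) := by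
        calc volume S ≤ volume (Set.Icc a b) := measure_mono hSIcc
        _ = ENNReal.ofReal (b - a) := Real.volume_Icc
      -- convexity of the slice S
      have hSconv : Convex ℝ S := by
        intro t₁ h₁ t₂ h₂ p q hp hq hpq
        have h₁' : ((x, t₁) : (Fin n → ℝ) × ℝ) ∈ {p | α < f p} := h₁
        have h₂' : ((x, t₂) : (Fin n → ℝ) × ℝ) ∈ {p | α < f p} := h₂
        have := hKconv h₁' h₂' hp hq hpq
        have heq : p • ((x, t₁) : (Fin n → ℝ) × ℝ) + q • (x, t₂) = (x, p * t₁ + q * t₂) := by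
          ext i
          · simp [Prod.smul_mk]
            rw [← add_mul, hpq, one_mul]
          · simp [Prod.smul_mk]
        rwa [heq] at this
      have hIooS : Set.Ioo a b ⊆ S := by
        intro z hz
        obtain ⟨t₁, ht₁, ht₁'⟩ := exists_lt_of_csInf_lt hS hz.1
        obtain ⟨t₂, ht₂, ht₂'⟩ := exists_lt_of_lt_csSup hS hz.2
        exact hSconv.ordConnected.out ht₁ ht₂ ⟨ht₁'.le, ht₂'.le⟩
      -- the translated interval is contained in the slice at r • x
      set a' := ((1 + r) * a - (1 - r) * b) / 2 with ha'def
      have hIoo' : Set.Ioo a' (a' + (b - a)) ⊆ {t : ℝ | α < f (r • x, t)} := by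
        intro z hz
        have hba : (0:ℝ) < b - a := by
          by_contra h
          push_neg at h
          have : a' + (b - a) ≤ a' := by linarith
          exact absurd (lt_trans hz.1 hz.2) (not_lt.mpr this)
        set u := (z - a') / (b - a) with hudef
        have hu0 : 0 < u := div_pos (by linarith [hz.1]) hba
        have hu1 : u < 1 := by
          rw [hudef, div_lt_one hba]
          linarith [hz.2]
        set t := a + u * (b - a) with htdef
        set s := b - u * (b - a) with hsdef
        have htmem : t ∈ S := hIooS ⟨by nlinarith, by nlinarith⟩
        have hsmem : s ∈ S := hIooS ⟨by nlinarith, by nlinarith⟩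
        have hp1 : ((x, t) : (Fin n → ℝ) × ℝ) ∈ {p | α < f p} := htmem
        have hp2 : ((-x, -s) : (Fin n → ℝ) × ℝ) ∈ {p | α < f p} := by
          have : ((x, s) : (Fin n → ℝ) × ℝ) ∈ {p | α < f p} := hsmem
          exact hKsym _ this
        have hc1 : (0:ℝ) ≤ (1 + r) / 2 := by linarith [hr.1]
        have hc2 : (0:ℝ) ≤ (1 - r) / 2 := by linarith [hr.2]
        have hc3 : (1 + r) / 2 + (1 - r) / 2 = 1 := by ring
        have hmem := hKconv hp1 hp2 hc1 hc2 hc3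
        have heq : ((1 + r) / 2) • ((x, t) : (Fin n → ℝ) × ℝ) + ((1 - r) / 2) • (-x, -s)
            = (r • x, z) := by
          ext i
          · simp only [Prod.smul_mk, Prod.mk_add_mk, Prod.fst, Pi.add_apply, Pi.smul_apply,
              smul_eq_mul, Pi.neg_apply]
            ring
          · simp only [Prod.smul_mk, Prod.mk_add_mk, Prod.snd, smul_eq_mul]
            rw [htdef, hsdef, hudef]
            field_simp
            ring
        rwa [heq] at hmem
      have : volume S ≤ volume {t : ℝ | α < f (r • x, t)} := by
        calc volume S ≤ ENNReal.ofReal (b - a) := hvolS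
        _ = volume (Set.Ioo a' (a' + (b - a))) := by rw [Real.volume_Ioo]; ring_nf
        _ ≤ volume {t : ℝ | α < f (r • x, t)} := measure_mono hIoo'
      exact this
    have hL : L x ≤ L (r • x) := by
      rw [hlc x, hlc (r • x)]
      refine lintegral_mono_ae ?_
      rw [ae_restrict_iff' measurableSet_Ioi]
      exact Filter.Eventually.of_forall fun α hα => hslice α hα
    rw [hg x, hg (r • x)]
    exact ENNReal.toReal_mono (hLfin _) hL
  · -- lower semicontinuity
    intro x c hc
    rcases lt_or_ge c 0 with h0 | h0
    · exact Filter.Eventually.of_forall fun x' =>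
        lt_of_lt_of_le h0 (integral_nonneg fun t => hnn _)
    by_contra h
    have hfreq : ∃ᶠ x' in nhds x, (∫ t, f (x', t)) ≤ c := by
      simpa [Filter.not_eventually, not_lt] using h
    obtain ⟨u, hu_tendsto, hu⟩ := Filter.exists_seq_forall_of_frequently hfreq
    have hliminf : ∀ t : ℝ, ENNReal.ofReal (f (x, t)) ≤
        Filter.liminf (fun k => ENNReal.ofReal (f (u k, t))) Filter.atTop := by
      intro t
      rw [Filter.le_liminf_iff]
      intro b hb
      have hb_top : b ≠ ⊤ := (hb.trans_le le_top).ne_top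
      have hbR : b.toReal < f (x, t) := (ENNReal.lt_ofReal_iff_toReal_lt hb_top).mp hb
      have hev := hlsc (x, t) b.toReal hbR
      have htend : Filter.Tendsto (fun k => (u k, t)) Filter.atTop (nhds (x, t)) :=
        hu_tendsto.prodMk_nhds tendsto_const_nhds
      exact (htend.eventually hev).mono fun k hk =>
        (ENNReal.lt_ofReal_iff_toReal_lt hb_top).mpr hk
    have hfatou : L x ≤ Filter.liminf (fun k => L (u k)) Filter.atTop :=
      le_trans (lintegral_mono fun t => hliminf t)
        (lintegral_liminf_le fun k => ENNReal.measurable_ofReal.comp (hmx (u k)))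
    have hub : Filter.liminf (fun k => L (u k)) Filter.atTop ≤ ENNReal.ofReal c := by
      have hk : ∀ k, L (u k) ≤ ENNReal.ofReal c := by
        intro k
        have := hu k
        rw [hg (u k)] at this
        exact (ENNReal.le_ofReal_iff_toReal_le (hLfin _) h0).mpr this
      calc Filter.liminf (fun k => L (u k)) Filter.atTop
          ≤ Filter.liminf (fun _ => ENNReal.ofReal c) Filter.atTop :=
            Filter.liminf_le_liminf (Filter.Eventually.of_forall hk)
        _ = ENNReal.ofReal c := Filter.liminf_const _
    have hle : (∫ t, f (x, t)) ≤ c := by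
      rw [hg x]
      calc (L x).toReal ≤ (ENNReal.ofReal c).toReal :=
            ENNReal.toReal_mono ENNReal.ofReal_ne_top (le_trans hfatou hub)
        _ = c := ENNReal.toReal_ofReal h0
    exact absurd hle (not_le.mpr hc)
end

section
/- Let X and Y be independent nonnegative integer-valued random variables with mass functions p and q, means μ and ν, and relative scores ρ_X(x) = (x+1)p(x+1)/(μ p(x)) − 1, ρ_Y defined analogously. Then with α = μ/(μ+ν), the relative score of X+Y satisfies ρ_{X+Y}(z) = E[α ρ_X(X) + (1−α) ρ_Y(Y) | X+Y = z]. -/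
/-- Projection formula for relative scores of a sum of independent nonnegative
integer-valued random variables: with `α = μ/(μ+ν)`,
`ρ_{X+Y}(z) = E[α ρ_X(X) + (1−α) ρ_Y(Y) | X+Y = z]`. -/
theorem stmt_14 (p q : ℕ → ℝ) (μ ν : ℝ)
    (hp_pos : ∀ x, 0 < p x) (hq_pos : ∀ x, 0 < q x)
    (hp_sum : HasSum p 1) (hq_sum : HasSum q 1)
    (hμ : HasSum (fun x : ℕ => (x : ℝ) * p x) μ)
    (hν : HasSum (fun x : ℕ => (x : ℝ) * q x) ν)
    (hμ_pos : 0 < μ) (hν_pos : 0 < ν) :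
    ∀ z : ℕ,
      ((z + 1 : ℝ) * (∑ x ∈ Finset.range (z + 2), p x * q (z + 1 - x))) /
          ((μ + ν) * ∑ x ∈ Finset.range (z + 1), p x * q (z - x)) - 1 =
        (∑ x ∈ Finset.range (z + 1),
            ((μ / (μ + ν)) * ((x + 1 : ℝ) * p (x + 1) / (μ * p x) - 1) +
              (1 - μ / (μ + ν)) *
                ((z - x + 1 : ℝ) * q (z - x + 1) / (ν * q (z - x)) - 1)) *
              (p x * q (z - x))) /
          (∑ x ∈ Finset.range (z + 1), p x * q (z - x)) := by
  intro z
  have hμν : (0:ℝ) < μ + ν := by linarith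
  set S := ∑ x ∈ Finset.range (z + 1), p x * q (z - x) with hS
  set S' := ∑ x ∈ Finset.range (z + 2), p x * q (z + 1 - x) with hS'
  have hSpos : 0 < S := Finset.sum_pos
    (fun x _ => mul_pos (hp_pos x) (hq_pos _)) ⟨0, by simp⟩
  -- termwise simplification
  have hterm : ∀ x ∈ Finset.range (z + 1),
      ((μ / (μ + ν)) * ((x + 1 : ℝ) * p (x + 1) / (μ * p x) - 1) +
        (1 - μ / (μ + ν)) *
          ((z - x + 1 : ℝ) * q (z - x + 1) / (ν * q (z - x)) - 1)) *
        (p x * q (z - x))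
      = (((x : ℝ) + 1) * p (x + 1) * q (z - x)
          + ((z : ℝ) - x + 1) * p x * q (z - x + 1)) / (μ + ν)
          - p x * q (z - x) := by
    intro x hx
    have hpx := (hp_pos x).ne'
    have hqx := (hq_pos (z - x)).ne'
    field_simp
    ring
  rw [Finset.sum_congr rfl hterm, Finset.sum_sub_distrib, ← Finset.sum_div,
    ← hS]
  -- the key reindexing identity
  have key : (∑ x ∈ Finset.range (z + 1),
      (((x : ℝ) + 1) * p (x + 1) * q (z - x)
        + ((z : ℝ) - x + 1) * p x * q (z - x + 1)))
      = ((z : ℝ) + 1) * S' := by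
    rw [Finset.sum_add_distrib]
    have h1 : (∑ x ∈ Finset.range (z + 1), ((x : ℝ) + 1) * p (x + 1) * q (z - x))
        = ∑ x ∈ Finset.range (z + 2), (x : ℝ) * (p x * q (z + 1 - x)) := by
      rw [Finset.sum_range_succ' (fun x => (x : ℝ) * (p x * q (z + 1 - x))) (z + 1)]
      simp only [Nat.cast_zero, zero_mul, add_zero]
      refine Finset.sum_congr rfl fun x hx => ?_
      have : z + 1 - (x + 1) = z - x := by omega
      rw [this]
      push_cast
      ring
    have h2 : (∑ x ∈ Finset.range (z + 2), ((z : ℝ) + 1 - x) * (p x * q (z + 1 - x)))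
        = ∑ x ∈ Finset.range (z + 1), ((z : ℝ) - x + 1) * p x * q (z - x + 1) := by
      rw [Finset.sum_range_succ, show ((z : ℝ) + 1 - ((z + 1 : ℕ) : ℝ)) = 0 by
        push_cast; ring, zero_mul, add_zero]
      refine Finset.sum_congr rfl fun x hx => ?_
      have hxz : x ≤ z := by
        simp only [Finset.mem_range] at hx; omega
      have e1 : z + 1 - x = z - x + 1 := by omega
      rw [e1]
      ring
    rw [h1, ← h2, ← Finset.sum_add_distrib, hS', Finset.mul_sum]
    refine Finset.sum_congr rfl fun x hx => ?_
    ring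
  rw [key]
  field_simp
end

section
/- Efron's monotonicity theorem (m = 2): let X and Y be independent real random variables with log-concave densities, and let Φ : ℝ² → ℝ be bounded, measurable, and nondecreasing in each coordinate. Then g(z) = E[Φ(X,Y) | X+Y = z] is nondecreasing in z (where g(z) = ∫ Φ(x, z−x) f_X(x) f_Y(z−x) dx / ∫ f_X(x) f_Y(z−x) dx on the set where the denominator is positive). -/
/-!
Given `X + Y = z`, the variable `X` has density `p_z x ∝ f_X x * f_Y (z - x)`. For `z₁ ≤ z₂`,
log-concavity of `f_Y` makes `p_{z₂} / p_{z₁}` nondecreasing, and log-concavity of `f_X` makes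
`p_{z₁} / p_{z₂} (· + (z₂ - z₁))` nondecreasing. Likelihood-ratio order implies stochastic
order, so `X_{z₁} ≤ X_{z₂} ≤ X_{z₁} + (z₂ - z₁)` stochastically. Realising `X_{z₁}` and
`X_{z₂}` as quantile functions of one uniform variable makes these inequalities pointwise:
`X_{z₁} ≤ X_{z₂}` and `z₁ - X_{z₁} ≤ z₂ - X_{z₂}`. Coordinatewise monotonicity of `Φ` concludes.
-/

open MeasureTheory ProbabilityTheory Set

namespace Efron

def IsLogConcave (f : ℝ → ℝ) : Prop :=
  ∀ x y t : ℝ, t ∈ Icc (0 : ℝ) 1 → f (t * x + (1 - t) * y) ≥ f x ^ t * f y ^ (1 - t)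

lemma IsLogConcave.mul_le_mul_add {f : ℝ → ℝ} (hf : IsLogConcave f) (hnn : ∀ x, 0 ≤ f x)
    {x y s : ℝ} (hxy : x ≤ y) (hs : 0 ≤ s) : f x * f (y + s) ≤ f (x + s) * f y := by
  set t := s / (y + s - x)
  have hsd : s ≤ y + s - x := by linarith
  have ht : t ∈ Icc (0 : ℝ) 1 :=
    ⟨div_nonneg hs (hs.trans hsd), div_le_one_of_le₀ hsd (hs.trans hsd)⟩
  have hts : t * (y + s - x) = s := by
    rcases (hs.trans hsd).eq_or_lt with h | h
    · rw [← h, mul_zero]; linarith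
    · exact div_mul_cancel₀ s h.ne'
  have h₁ := hf (y + s) x t ht
  have h₂ := hf x (y + s) t ht
  rw [show t * (y + s) + (1 - t) * x = x + s by linear_combination hts] at h₁
  rw [show t * x + (1 - t) * (y + s) = y by linear_combination -hts] at h₂
  have hprod := mul_nonneg (hnn x) (hnn (y + s))
  calc f x * f (y + s)
      = (f x * f (y + s)) ^ t * (f x * f (y + s)) ^ (1 - t) := by
        rw [← Real.rpow_add' hprod (by norm_num), add_sub_cancel, Real.rpow_one]
    _ = (f (y + s) ^ t * f x ^ (1 - t)) * (f x ^ t * f (y + s) ^ (1 - t)) := by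
        rw [Real.mul_rpow (hnn _) (hnn _), Real.mul_rpow (hnn _) (hnn _)]; ring
    _ ≤ f (x + s) * f y := mul_le_mul h₁ h₂
        (mul_nonneg (Real.rpow_nonneg (hnn _) _) (Real.rpow_nonneg (hnn _) _)) (hnn _)

lemma setIntegral_Iic_mul_setIntegral_Ioi_le {p q : ℝ → ℝ} (hp : Integrable p)
    (hq : Integrable q) (hpq : ∀ ⦃y x⦄, y ≤ x → p x * q y ≤ q x * p y) (c : ℝ) :
    (∫ x in Iic c, q x) * (∫ x in Ioi c, p x) ≤
      (∫ x in Iic c, p x) * (∫ x in Ioi c, q x) := by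
  have hpoint : ∀ y ∈ Iic c, q y * (∫ x in Ioi c, p x) ≤ p y * (∫ x in Ioi c, q x) := by
    intro y hy
    rw [← integral_const_mul, ← integral_const_mul]
    refine setIntegral_mono_on (hp.restrict.const_mul _) (hq.restrict.const_mul _)
      measurableSet_Ioi fun x hx => ?_
    linarith [hpq (le_trans hy (le_of_lt hx))]
  calc (∫ x in Iic c, q x) * (∫ x in Ioi c, p x)
      = ∫ y in Iic c, q y * (∫ x in Ioi c, p x) := (integral_mul_const _ _).symm
    _ ≤ ∫ y in Iic c, p y * (∫ x in Ioi c, q x) :=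
        setIntegral_mono_on (hq.restrict.mul_const _) (hp.restrict.mul_const _)
          measurableSet_Iic hpoint
    _ = (∫ x in Iic c, p x) * (∫ x in Ioi c, q x) := integral_mul_const _ _

lemma setIntegral_Iic_comp_add_right (p : ℝ → ℝ) (Δ c : ℝ) :
    ∫ x in Iic c, p (x + Δ) = ∫ x in Iic (c + Δ), p x := by
  have := (measurePreserving_add_right volume Δ).setIntegral_preimage_emb
    (measurableEmbedding_addRight Δ) p (Iic (c + Δ))
  rwa [preimage_add_const_Iic, add_sub_cancel_right] at this

section Quantile

variable (μ : Measure ℝ)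

noncomputable def quantile (u : ℝ) : ℝ := sInf {c | u ≤ cdf μ c}

variable {μ}

lemma bddBelow_le_cdf {u : ℝ} (hu : 0 < u) : BddBelow {c | u ≤ cdf μ c} := by
  obtain ⟨c₀, hc₀⟩ := ((tendsto_cdf_atBot μ).eventually_lt_const hu).exists
  exact ⟨c₀, fun c hc => le_of_not_gt fun hlt =>
    (hc.trans ((cdf μ).mono hlt.le)).not_gt hc₀⟩

lemma nonempty_le_cdf {u : ℝ} (hu : u < 1) : {c | u ≤ cdf μ c}.Nonempty :=
  (((tendsto_cdf_atTop μ).eventually_const_lt hu).exists).imp fun _ => le_of_lt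

/-- Right continuity of the CDF puts the infimum into the set. -/
lemma le_cdf_quantile {u : ℝ} (hu : u ∈ Ioo (0 : ℝ) 1) : u ≤ cdf μ (quantile μ u) := by
  have hS := nonempty_le_cdf (μ := μ) hu.2
  have hb := bddBelow_le_cdf (μ := μ) hu.1
  refine ge_of_tendsto (((cdf μ).right_continuous _).mono Ioi_subset_Ici_self).tendsto ?_
  filter_upwards [self_mem_nhdsWithin] with c hc
  obtain ⟨s, hs, hsc⟩ := exists_lt_of_csInf_lt hS hc
  exact hs.trans ((cdf μ).mono hsc.le)

lemma quantile_le_iff {u : ℝ} (hu : u ∈ Ioo (0 : ℝ) 1) {c : ℝ} :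
    quantile μ u ≤ c ↔ u ≤ cdf μ c :=
  ⟨fun h => (le_cdf_quantile hu).trans ((cdf μ).mono h),
    fun h => csInf_le (bddBelow_le_cdf hu.1) h⟩

lemma quantile_le_quantile_add {ν : Measure ℝ} {Δ : ℝ}
    (h : ∀ c, cdf μ c ≤ cdf ν (c + Δ)) {u : ℝ} (hu : u ∈ Ioo (0 : ℝ) 1) :
    quantile ν u ≤ quantile μ u + Δ :=
  (quantile_le_iff hu).2 ((le_cdf_quantile hu).trans (h _))

lemma monotoneOn_quantile : MonotoneOn (quantile μ) (Ioo 0 1) := fun _ ha _ hb hab =>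
  (quantile_le_iff ha).2 (hab.trans (le_cdf_quantile hb))

lemma aemeasurable_quantile : AEMeasurable (quantile μ) (volume.restrict (Ioo 0 1)) :=
  aemeasurable_restrict_of_monotoneOn measurableSet_Ioo monotoneOn_quantile

variable [IsProbabilityMeasure μ]

lemma map_quantile : (volume.restrict (Ioo 0 1)).map (quantile μ) = μ := by
  refine Measure.ext_of_Iic _ _ fun c => ?_
  rw [Measure.map_apply_of_aemeasurable aemeasurable_quantile measurableSet_Iic,
    Measure.restrict_apply' measurableSet_Ioo, ← ofReal_cdf]
  have hset : quantile μ ⁻¹' Iic c ∩ Ioo 0 1 = Ioo 0 1 ∩ Iic (cdf μ c) := by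
    ext u
    simp only [mem_inter_iff, mem_preimage, mem_Iic]
    exact ⟨fun ⟨h, hu⟩ => ⟨hu, (quantile_le_iff hu).1 h⟩,
      fun ⟨hu, h⟩ => ⟨(quantile_le_iff hu).2 h, hu⟩⟩
  rw [hset, measure_congr (Ioo_ae_eq_Ioc.inter (ae_eq_refl (Iic (cdf μ c)))), Ioc_inter_Iic,
    inf_eq_right.2 (cdf_le_one μ c), Real.volume_Ioc, sub_zero]

variable {E : Type*} [NormedAddCommGroup E] {φ : ℝ → E}

lemma integral_comp_quantile [NormedSpace ℝ E] (hφ : AEStronglyMeasurable φ μ) :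
    ∫ u in Ioo 0 1, φ (quantile μ u) = ∫ x, φ x ∂μ := by
  rw [← integral_map aemeasurable_quantile ((map_quantile (μ := μ)).symm ▸ hφ), map_quantile]

lemma integrableOn_comp_quantile (hφ : Integrable φ μ) :
    IntegrableOn (fun u => φ (quantile μ u)) (Ioo 0 1) :=
  (integrable_map_measure ((map_quantile (μ := μ)).symm ▸ hφ.1) aemeasurable_quantile).1
    ((map_quantile (μ := μ)).symm ▸ hφ)

end Quantile

noncomputable def densityMeasure (p : ℝ → ℝ) : Measure ℝ :=
  (ENNReal.ofReal (∫ x, p x))⁻¹ • volume.withDensity fun x => ENNReal.ofReal (p x)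

section DensityMeasure

variable {p : ℝ → ℝ} (hp : ∀ x, 0 ≤ p x) (hpi : 0 < ∫ x, p x)
include hp hpi

lemma densityMeasure_apply (s : Set ℝ) :
    densityMeasure p s = ENNReal.ofReal (∫ x in s, p x) / ENNReal.ofReal (∫ x, p x) := by
  rw [densityMeasure, Measure.smul_apply, smul_eq_mul, withDensity_apply',
    ENNReal.div_eq_inv_mul,
    ofReal_integral_eq_lintegral_ofReal (Integrable.of_integral_ne_zero hpi.ne').restrict
      (ae_of_all _ hp)]

lemma isProbabilityMeasure_densityMeasure : IsProbabilityMeasure (densityMeasure p) :=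
  ⟨by rw [densityMeasure_apply hp hpi, Measure.restrict_univ,
    ENNReal.div_self (ENNReal.ofReal_pos.2 hpi).ne' ENNReal.ofReal_ne_top]⟩

lemma cdf_densityMeasure (c : ℝ) :
    cdf (densityMeasure p) c = (∫ x in Iic c, p x) / ∫ x, p x := by
  have := isProbabilityMeasure_densityMeasure hp hpi
  rw [cdf_eq_real, measureReal_def, densityMeasure_apply hp hpi, ENNReal.toReal_div,
    ENNReal.toReal_ofReal (setIntegral_nonneg measurableSet_Iic fun x _ => hp x),
    ENNReal.toReal_ofReal hpi.le]

lemma integral_densityMeasure (φ : ℝ → ℝ) :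
    ∫ x, φ x ∂densityMeasure p = (∫ x, φ x * p x) / ∫ x, p x := by
  have hpm := (Integrable.of_integral_ne_zero hpi.ne').aemeasurable
  rw [densityMeasure, integral_smul_measure, integral_withDensity_eq_integral_toReal_smul₀
    hpm.ennreal_ofReal (ae_of_all _ fun _ => ENNReal.ofReal_lt_top), ENNReal.toReal_inv,
    ENNReal.toReal_ofReal hpi.le, smul_eq_mul, inv_mul_eq_div]
  simp_rw [ENNReal.toReal_ofReal (hp _), smul_eq_mul, mul_comm (p _)]

lemma cdf_densityMeasure_comp_add_right (Δ c : ℝ) :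
    cdf (densityMeasure fun x => p (x + Δ)) c = cdf (densityMeasure p) (c + Δ) := by
  have hpi' : 0 < ∫ x, p (x + Δ) := by rwa [integral_add_right_eq_self]
  rw [cdf_densityMeasure (fun x => hp _) hpi', cdf_densityMeasure hp hpi,
    setIntegral_Iic_comp_add_right, integral_add_right_eq_self]

end DensityMeasure

/-- Likelihood-ratio order implies stochastic order. -/
lemma cdf_densityMeasure_le_of_mul_le_mul {p q : ℝ → ℝ} (hp : ∀ x, 0 ≤ p x)
    (hpi : 0 < ∫ x, p x) (hq : ∀ x, 0 ≤ q x) (hqi : 0 < ∫ x, q x)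
    (hpq : ∀ ⦃y x⦄, y ≤ x → p x * q y ≤ q x * p y) (c : ℝ) :
    cdf (densityMeasure q) c ≤ cdf (densityMeasure p) c := by
  have hpI := Integrable.of_integral_ne_zero hpi.ne'
  have hqI := Integrable.of_integral_ne_zero hqi.ne'
  have key := setIntegral_Iic_mul_setIntegral_Ioi_le hpI hqI hpq c
  have hp_split := integral_add_compl (measurableSet_Iic (a := c)) hpI
  have hq_split := integral_add_compl (measurableSet_Iic (a := c)) hqI
  rw [compl_Iic] at hp_split hq_split
  rw [cdf_densityMeasure hq hqi, cdf_densityMeasure hp hpi, div_le_div_iff₀ hqi hpi,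
    ← hp_split, ← hq_split]
  linarith

lemma integral_comp_sub_le_of_cdf_le {μ ν : Measure ℝ} [IsProbabilityMeasure μ]
    [IsProbabilityMeasure ν] {Φ : ℝ → ℝ → ℝ} (hΦ_meas : Measurable (Function.uncurry Φ))
    (hΦ_bdd : ∃ M, ∀ x y, |Φ x y| ≤ M) (hΦ_mono₁ : ∀ y, Monotone fun x => Φ x y)
    (hΦ_mono₂ : ∀ x, Monotone (Φ x)) {z₁ z₂ : ℝ} (hνμ : ∀ c, cdf ν c ≤ cdf μ c)
    (hμν : ∀ c, cdf μ c ≤ cdf ν (c + (z₂ - z₁))) :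
    ∫ x, Φ x (z₁ - x) ∂μ ≤ ∫ x, Φ x (z₂ - x) ∂ν := by
  obtain ⟨M, hM⟩ := hΦ_bdd
  have hφ (z : ℝ) : Measurable fun x => Φ x (z - x) :=
    hΦ_meas.comp (measurable_id.prodMk (measurable_const.sub measurable_id))
  have hint (z : ℝ) (ρ : Measure ℝ) [IsProbabilityMeasure ρ] :
      Integrable (fun x => Φ x (z - x)) ρ :=
    .of_bound (hφ z).aestronglyMeasurable M (ae_of_all _ fun _ => hM _ _)
  rw [← integral_comp_quantile (hφ z₁).aestronglyMeasurable,
    ← integral_comp_quantile (hφ z₂).aestronglyMeasurable]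
  refine setIntegral_mono_on (integrableOn_comp_quantile (hint z₁ μ))
    (integrableOn_comp_quantile (hint z₂ ν)) measurableSet_Ioo fun u hu => ?_
  have hX : quantile μ u ≤ quantile ν u := by
    simpa using quantile_le_quantile_add (Δ := 0) (by simpa using hνμ) hu
  have hY := quantile_le_quantile_add hμν hu
  calc Φ (quantile μ u) (z₁ - quantile μ u) ≤ Φ (quantile ν u) (z₁ - quantile μ u) :=
        hΦ_mono₁ _ hX
    _ ≤ Φ (quantile ν u) (z₂ - quantile ν u) := hΦ_mono₂ _ (by linarith)

end Efron

open Efron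

theorem stmt_16_general (fX fY : ℝ → ℝ) (Φ : ℝ → ℝ → ℝ)
    (hfX_nn : ∀ x, 0 ≤ fX x) (hfY_nn : ∀ x, 0 ≤ fY x)
    (hfX_lc : ∀ x y t : ℝ, t ∈ Set.Icc (0:ℝ) 1 →
        fX (t * x + (1 - t) * y) ≥ fX x ^ t * fX y ^ (1 - t))
    (hfY_lc : ∀ x y t : ℝ, t ∈ Set.Icc (0:ℝ) 1 →
        fY (t * x + (1 - t) * y) ≥ fY x ^ t * fY y ^ (1 - t))
    (hΦ_meas : Measurable (Function.uncurry Φ))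
    (hΦ_bdd : ∃ M, ∀ x y, |Φ x y| ≤ M)
    (hΦ_mono₁ : ∀ y, Monotone fun x => Φ x y)
    (hΦ_mono₂ : ∀ x, Monotone (Φ x)) :
    ∀ z₁ z₂ : ℝ, z₁ ≤ z₂ →
      0 < (∫ x, fX x * fY (z₁ - x)) → 0 < (∫ x, fX x * fY (z₂ - x)) →
      (∫ x, Φ x (z₁ - x) * (fX x * fY (z₁ - x))) / (∫ x, fX x * fY (z₁ - x)) ≤
        (∫ x, Φ x (z₂ - x) * (fX x * fY (z₂ - x))) / (∫ x, fX x * fY (z₂ - x)) := by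
  intro z₁ z₂ hz h₁ h₂
  set Δ := z₂ - z₁
  set p₁ : ℝ → ℝ := fun x => fX x * fY (z₁ - x)
  set p₂ : ℝ → ℝ := fun x => fX x * fY (z₂ - x)
  have hp₁ (x : ℝ) : 0 ≤ p₁ x := mul_nonneg (hfX_nn x) (hfY_nn _)
  have hp₂ (x : ℝ) : 0 ≤ p₂ x := mul_nonneg (hfX_nn x) (hfY_nn _)
  have hlrY : ∀ ⦃y x⦄, y ≤ x → p₁ x * p₂ y ≤ p₂ x * p₁ y := by
    intro y x hyx
    have h := IsLogConcave.mul_le_mul_add hfY_lc hfY_nn (sub_le_sub_left hyx z₁)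
      (sub_nonneg.2 hz)
    rw [show z₁ - y + Δ = z₂ - y by ring, show z₁ - x + Δ = z₂ - x by ring] at h
    have := mul_le_mul_of_nonneg_left h (mul_nonneg (hfX_nn x) (hfX_nn y))
    simp only [p₁, p₂]
    linarith
  have hlrX : ∀ ⦃y x⦄, y ≤ x → p₂ (x + Δ) * p₁ y ≤ p₁ x * p₂ (y + Δ) := by
    intro y x hyx
    have h := IsLogConcave.mul_le_mul_add hfX_lc hfX_nn hyx (sub_nonneg.2 hz)
    have := mul_le_mul_of_nonneg_left h (mul_nonneg (hfY_nn (z₁ - x)) (hfY_nn (z₁ - y)))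
    simp only [p₁, p₂, show ∀ w, z₂ - (w + Δ) = z₁ - w from fun w => by ring]
    linarith
  have := isProbabilityMeasure_densityMeasure hp₁ h₁
  have := isProbabilityMeasure_densityMeasure hp₂ h₂
  have hcdf₂ (c : ℝ) : cdf (densityMeasure p₁) c ≤ cdf (densityMeasure p₂) (c + Δ) := by
    rw [← cdf_densityMeasure_comp_add_right hp₂ h₂]
    exact cdf_densityMeasure_le_of_mul_le_mul (fun x => hp₂ _)
      (by rwa [integral_add_right_eq_self]) hp₁ h₁ hlrX c
  have := integral_comp_sub_le_of_cdf_le hΦ_meas hΦ_bdd hΦ_mono₁ hΦ_mono₂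
    (cdf_densityMeasure_le_of_mul_le_mul hp₁ h₁ hp₂ h₂ hlrY) hcdf₂
  rwa [integral_densityMeasure hp₁ h₁, integral_densityMeasure hp₂ h₂] at this

/-- Efron's monotonicity theorem for `m = 2`: if `X, Y` are independent with
log-concave densities and `Φ : ℝ² → ℝ` is bounded, measurable, and nondecreasing
in each coordinate, then `g(z) = E[Φ(X,Y) | X+Y = z]` (defined as a ratio of
integrals wherever the denominator is positive) is nondecreasing in `z`. -/
theorem stmt_16 (fX fY : ℝ → ℝ) (Φ : ℝ → ℝ → ℝ)
    (hfX_nn : ∀ x, 0 ≤ fX x) (hfY_nn : ∀ x, 0 ≤ fY x)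
    (hfX_meas : Measurable fX) (hfY_meas : Measurable fY)
    (hfX_int : ∫ x, fX x = 1) (hfY_int : ∫ x, fY x = 1)
    (hfX_lc : ∀ x y t : ℝ, t ∈ Set.Icc (0:ℝ) 1 →
        fX (t * x + (1 - t) * y) ≥ fX x ^ t * fX y ^ (1 - t))
    (hfY_lc : ∀ x y t : ℝ, t ∈ Set.Icc (0:ℝ) 1 →
        fY (t * x + (1 - t) * y) ≥ fY x ^ t * fY y ^ (1 - t))
    (hΦ_meas : Measurable (Function.uncurry Φ))
    (hΦ_bdd : ∃ M, ∀ x y, |Φ x y| ≤ M)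
    (hΦ_mono₁ : ∀ y, Monotone fun x => Φ x y)
    (hΦ_mono₂ : ∀ x, Monotone (Φ x)) :
    ∀ z₁ z₂ : ℝ, z₁ ≤ z₂ →
      0 < (∫ x, fX x * fY (z₁ - x)) → 0 < (∫ x, fX x * fY (z₂ - x)) →
      (∫ x, Φ x (z₁ - x) * (fX x * fY (z₁ - x))) / (∫ x, fX x * fY (z₁ - x)) ≤
        (∫ x, Φ x (z₂ - x) * (fX x * fY (z₂ - x))) / (∫ x, fX x * fY (z₂ - x)) :=
  stmt_16_general fX fY Φ hfX_nn hfY_nn hfX_lc hfY_lc hΦ_meas hΦ_bdd hΦ_mono₁ hΦ_mono₂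
end
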